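/- Suppose the trace function β satisfies Condition 1 and γ ∈ [0,1). Then for every Q ∈ ℝ^n and every (s,a), the operator M admits the refactored form (MQ)(s,a) = Σ_{t=0}^∞ γ^t Σ_{F_t} Pr_μ(F_t) β(F_t) R(S_t, A_t) + Σ_{t=1}^∞ γ^t Σ_{F_t} Pr_μ(F_t) (β(F_{t−1}) ρ_t − β(F_t)) Q(S_t, A_t), where the inner sums range over all length-t trajectories F_t from (s,a), F_{t−1} is the length-(t−1) prefix of F_t, and both outer series converge absolutely. In particular, under Condition 1 all the bootstrap weights β(F_{t−1}) ρ_t − β(F_t) are nonnegative. -/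

import Mathlib

open scoped BigOperators

/-- `P` is a transition function: `P s a` is a probability distribution on next states. -/
def IsTransition {S A : Type} [Fintype S] (P : S → A → S → ℝ) : Prop :=
  (∀ s a s', 0 ≤ P s a s') ∧ ∀ s a, ∑ s', P s a s' = 1

/-- `π` is a policy: `π s` is a probability distribution on actions. -/
def IsPolicy {S A : Type} [Fintype A] (π : S → A → ℝ) : Prop :=
  (∀ s a, 0 ≤ π s a) ∧ ∀ s, ∑ a, π s a = 1

/-- A behavior policy assigns positive probability to every action in every state. -/
def IsBehavior {S A : Type} [Fintype A] (μ : S → A → ℝ) : Prop :=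
  IsPolicy μ ∧ ∀ s a, 0 < μ s a

/-- The policy matrix `P_π((s,a),(s',a')) = P(s'|s,a)·π(a'|s')`. -/
def polMat {S A : Type} (P : S → A → S → ℝ) (π : S → A → ℝ) :
    Matrix (S × A) (S × A) ℝ :=
  fun x y => P x.1 x.2 y.1 * π y.1 y.2

/-- The importance-sampling ratio `ρ(s,a) = π(a|s) / μ(a|s)`. -/
noncomputable def isRatio {S A : Type} (π μ : S → A → ℝ) (x : S × A) : ℝ :=
  π x.1 x.2 / μ x.1 x.2

/-- Probability under behavior policy `μ` of a length-`t` trajectory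
`F = ((S_0,A_0),…,(S_t,A_t))`:  `∏_{k=1}^t P(S_k|S_{k-1},A_{k-1})·μ(A_k|S_k)`. -/
def prMu {S A : Type} (P : S → A → S → ℝ) (μ : S → A → ℝ) {t : ℕ}
    (F : Fin (t + 1) → S × A) : ℝ :=
  ∏ k : Fin t,
    (P (F k.castSucc).1 (F k.castSucc).2 (F k.succ).1 * μ (F k.succ).1 (F k.succ).2)

/-- A trace function: a nonnegative weight for every finite trajectory,
equal to `1` on length-0 trajectories. -/
def IsTrace {S A : Type} (β : (t : ℕ) → (Fin (t + 1) → S × A) → ℝ) : Prop :=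
  (∀ t F, 0 ≤ β t F) ∧ ∀ F : Fin 1 → S × A, β 0 F = 1

/-- Condition 1: `β(F_t) ≤ β(F_{t-1})·ρ_t` for every `t ≥ 1` and every trajectory `F_t`,
where `F_{t-1}` is the length-`(t-1)` prefix. -/
def Cond1 {S A : Type} (π μ : S → A → ℝ)
    (β : (t : ℕ) → (Fin (t + 1) → S × A) → ℝ) : Prop :=
  ∀ (t : ℕ) (F : Fin (t + 2) → S × A),
    β (t + 1) F ≤ β t (fun k => F k.castSucc) * isRatio π μ (F (Fin.last (t + 1)))

/-- The matrix `B_t((s,a),(s',a')) = Σ_{F_t from (s,a) ending at (s',a')} Pr_μ(F_t)·β(F_t)`. -/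
noncomputable def Bmat {S A : Type} [Fintype S] [Fintype A] [DecidableEq S] [DecidableEq A]
    (P : S → A → S → ℝ) (μ : S → A → ℝ)
    (β : (t : ℕ) → (Fin (t + 1) → S × A) → ℝ) (t : ℕ) :
    Matrix (S × A) (S × A) ℝ :=
  fun x y => ∑ F : Fin (t + 1) → S × A,
    if F 0 = x ∧ F (Fin.last t) = y then prMu P μ F * β t F else 0

/-- The Bellman operator `T_π Q = R + γ P_π Q`. -/
noncomputable def Tpi {S A : Type} [Fintype S] [Fintype A]
    (P : S → A → S → ℝ) (R : S × A → ℝ) (π : S → A → ℝ) (γ : ℝ)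
    (Q : S × A → ℝ) : S × A → ℝ :=
  fun x => R x + γ * (polMat P π).mulVec Q x

/-- The Bellman optimality operator
`(T Q)(s,a) = R(s,a) + γ Σ_{s'} P(s'|s,a) max_{a'} Q(s',a')`. -/
noncomputable def Topt {S A : Type} [Fintype S] [Fintype A] [Nonempty A]
    (P : S → A → S → ℝ) (R : S × A → ℝ) (γ : ℝ) (Q : S × A → ℝ) : S × A → ℝ :=
  fun x => R x + γ * ∑ s', P x.1 x.2 s' * ⨆ a', Q (s', a')

/-- The operator `M Q = Q + Σ_{t=0}^∞ γ^t B_t (T_π Q − Q)`. -/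
noncomputable def Mop {S A : Type} [Fintype S] [Fintype A] [DecidableEq S] [DecidableEq A]
    (P : S → A → S → ℝ) (R : S × A → ℝ) (π μ : S → A → ℝ)
    (β : (t : ℕ) → (Fin (t + 1) → S × A) → ℝ) (γ : ℝ)
    (Q : S × A → ℝ) : S × A → ℝ :=
  fun x => Q x + ∑' t : ℕ,
    γ ^ t * (Bmat P μ β t).mulVec (fun y => Tpi P R π γ Q y - Q y) x

/-- The matrix `Z = Σ_{t=1}^∞ γ^t (B_{t−1} P_π − B_t)`. -/
noncomputable def Zmat {S A : Type} [Fintype S] [Fintype A] [DecidableEq S] [DecidableEq A]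
    (P : S → A → S → ℝ) (π μ : S → A → ℝ)
    (β : (t : ℕ) → (Fin (t + 1) → S × A) → ℝ) (γ : ℝ) :
    Matrix (S × A) (S × A) ℝ :=
  fun x y => ∑' t : ℕ,
    γ ^ (t + 1) * ((Bmat P μ β t * polMat P π - Bmat P μ β (t + 1)) x y)

/-- The matrix `C = Σ_{t=0}^∞ γ^t B_t`. -/
noncomputable def Cmat {S A : Type} [Fintype S] [Fintype A] [DecidableEq S] [DecidableEq A]
    (P : S → A → S → ℝ) (μ : S → A → ℝ)
    (β : (t : ℕ) → (Fin (t + 1) → S × A) → ℝ) (γ : ℝ) :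
    Matrix (S × A) (S × A) ℝ :=
  fun x y => ∑' t : ℕ, γ ^ t * Bmat P μ β t x y

/-- The operator `M Q = Q + C (T_π Q − Q)` with `C = Σ_t γ^t B_t`. -/
noncomputable def MopC {S A : Type} [Fintype S] [Fintype A] [DecidableEq S] [DecidableEq A]
    (P : S → A → S → ℝ) (R : S × A → ℝ) (π μ : S → A → ℝ)
    (β : (t : ℕ) → (Fin (t + 1) → S × A) → ℝ) (γ : ℝ)
    (Q : S × A → ℝ) : S × A → ℝ :=
  fun x => Q x + (Cmat P μ β γ).mulVec (fun y => Tpi P R π γ Q y - Q y) x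

/-!
Expanding `T_π Q − Q` turns the `t`-th term of `M Q` into
`γ^t B_t R + γ^{t+1} B_t P_π Q − γ^t B_t Q`; regrouping, the `Q`-terms become
`γ^{t+1} (B_t P_π − B_{t+1}) Q` plus a telescoping series whose sum is `−B_0 Q = −Q`, which
cancels the leading `Q`. On trajectories, `B_t P_π` is `B_t` extended by one step and reweighted
by `ρ`, so `(B_t P_π − B_{t+1})(s,a)` sums `Pr_μ(F_{t+1}) (β(F_t) ρ_{t+1} − β(F_{t+1}))`.
Condition 1 makes these weights nonnegative, so the row sums `B_t 1` decrease from `B_0 1 = 1`;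
hence every `B_t` and `B_t P_π` is substochastic, all terms are bounded by a multiple of `γ^t`,
and the series converge absolutely.
-/

open Finset Matrix

lemma summable_abs_pow_mul_of_abs_le {γ C : ℝ} {f : ℕ → ℝ} (hγ0 : 0 ≤ γ) (hγ1 : γ < 1)
    (hf : ∀ t, |f t| ≤ C) : Summable fun t => |γ ^ t * f t| := by
  refine Summable.of_nonneg_of_le (fun t => abs_nonneg _) (fun t => ?_)
    ((summable_geometric_of_lt_one hγ0 hγ1).mul_right C)
  rw [abs_mul, abs_of_nonneg (pow_nonneg hγ0 t)]
  exact mul_le_mul_of_nonneg_left (hf t) (pow_nonneg hγ0 t)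

lemma add_tsum_pow_mul_telescope {γ : ℝ} {a c d : ℕ → ℝ}
    (ha : Summable fun t => γ ^ t * a t) (hc : Summable fun t => γ ^ t * c t)
    (hd : Summable fun t => γ ^ t * d t) :
    d 0 + ∑' t, γ ^ t * (a t + γ * c t - d t) =
      (∑' t, γ ^ t * a t) + ∑' t, γ ^ (t + 1) * (c t - d (t + 1)) := by
  have hc' : Summable fun t => γ ^ (t + 1) * c t :=
    (hc.mul_left γ).congr fun t => by ring
  have hd' : Summable fun t => γ ^ (t + 1) * d (t + 1) := (summable_nat_add_iff 1).2 hd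
  have hsplit : ∀ t, γ ^ t * (a t + γ * c t - d t) =
      γ ^ t * a t + γ ^ (t + 1) * c t - γ ^ t * d t := fun t => by ring
  have hsplit' : ∀ t, γ ^ (t + 1) * (c t - d (t + 1)) =
      γ ^ (t + 1) * c t - γ ^ (t + 1) * d (t + 1) := fun t => by ring
  rw [tsum_congr hsplit, tsum_congr hsplit', (ha.add hc').tsum_sub hd, ha.tsum_add hc',
    hc'.tsum_sub hd', hd.tsum_eq_zero_add]
  ring

lemma Matrix.abs_mulVec_apply_le_norm {m n : Type*} [Fintype n] {M : Matrix m n ℝ}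
    (hM : ∀ i j, 0 ≤ M i j) (hM1 : M *ᵥ 1 ≤ 1) (g : n → ℝ) (i : m) :
    |(M *ᵥ g) i| ≤ ‖g‖ :=
  calc |(M *ᵥ g) i| ≤ ∑ j, |M i j * g j| := abs_sum_le_sum_abs _ _
    _ ≤ ∑ j, M i j * ‖g‖ := sum_le_sum fun j _ => by
        rw [abs_mul, abs_of_nonneg (hM i j)]
        exact mul_le_mul_of_nonneg_left (norm_le_pi_norm g j) (hM i j)
    _ = (M *ᵥ 1) i * ‖g‖ := by simp [mulVec, dotProduct, sum_mul]
    _ ≤ ‖g‖ := mul_le_of_le_one_left (norm_nonneg g) (hM1 i)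

lemma Fintype.sum_pi_fin_succ_snoc {X M : Type*} [Fintype X] [AddCommMonoid M] {t : ℕ}
    (f : (Fin (t + 2) → X) → M) :
    ∑ F, f F = ∑ G : Fin (t + 1) → X, ∑ y, f (Fin.snoc G y) := by
  rw [← (Fin.snocEquiv fun _ => X).sum_comp, Fintype.sum_prod_type, sum_comm]
  rfl

section MDP

variable {S A : Type} {P : S → A → S → ℝ} {π μ : S → A → ℝ}
  {β : (t : ℕ) → (Fin (t + 1) → S × A) → ℝ}

lemma prMu_snoc {t : ℕ} (G : Fin (t + 1) → S × A) (y : S × A) :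
    prMu P μ (Fin.snoc G y : Fin (t + 2) → S × A) =
      prMu P μ G * (P (G (Fin.last t)).1 (G (Fin.last t)).2 y.1 * μ y.1 y.2) := by
  simp only [prMu, Fin.prod_univ_castSucc, ← Fin.castSucc_succ, Fin.snoc_castSucc,
    Fin.succ_last, Fin.snoc_last]

lemma prMu_nonneg (hP : ∀ s a s', 0 ≤ P s a s') (hμ : ∀ s a, 0 ≤ μ s a) {t : ℕ}
    (F : Fin (t + 1) → S × A) : 0 ≤ prMu P μ F :=
  prod_nonneg fun _ _ => mul_nonneg (hP _ _ _) (hμ _ _)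

variable [Fintype S] [Fintype A]

lemma mulVec_Tpi_sub (B : Matrix (S × A) (S × A) ℝ) (R : S × A → ℝ) (γ : ℝ)
    (Q : S × A → ℝ) (x : S × A) :
    (B *ᵥ fun y => Tpi P R π γ Q y - Q y) x =
      (B *ᵥ R) x + γ * ((B * polMat P π) *ᵥ Q) x - (B *ᵥ Q) x := by
  have hT : (fun y => Tpi P R π γ Q y - Q y) = R + γ • (polMat P π *ᵥ Q) - Q := rfl
  rw [hT, mulVec_sub, mulVec_add, mulVec_smul, mulVec_mulVec]
  rfl

variable [DecidableEq S] [DecidableEq A]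

lemma polMat_mem_rowStochastic (hP : IsTransition P) (hπ : IsPolicy π) :
    polMat P π ∈ rowStochastic ℝ (S × A) := by
  refine mem_rowStochastic_iff_sum.2 ⟨fun x y => mul_nonneg (hP.1 _ _ _) (hπ.1 _ _), fun x => ?_⟩
  simp only [polMat, Fintype.sum_prod_type, ← mul_sum, hπ.2, mul_one, hP.2]

lemma Bmat_zero (hβ : IsTrace β) : Bmat P μ β 0 = 1 := by
  ext x y
  rw [Bmat, ← (Equiv.funUnique (Fin 1) (S × A)).symm.sum_comp]
  by_cases h : x = y
  · subst h
    simp [prMu, hβ.2]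
  · simp [prMu, hβ.2, h]

lemma Bmat_nonneg (hP : ∀ s a s', 0 ≤ P s a s') (hμ : ∀ s a, 0 ≤ μ s a) (hβ : IsTrace β)
    (t : ℕ) (x y : S × A) : 0 ≤ Bmat P μ β t x y :=
  sum_nonneg fun F _ => by
    split_ifs
    · exact mul_nonneg (prMu_nonneg hP hμ F) (hβ.1 t F)
    · exact le_rfl

lemma Bmat_mulVec_apply (t : ℕ) (g : S × A → ℝ) (x : S × A) :
    (Bmat P μ β t *ᵥ g) x =
      ∑ F : Fin (t + 1) → S × A,
        if F 0 = x then prMu P μ F * β t F * g (F (Fin.last t)) else 0 := by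
  simp only [mulVec, dotProduct, Bmat, sum_mul]
  rw [sum_comm]
  refine sum_congr rfl fun F _ => ?_
  by_cases h : F 0 = x <;> simp [h]

lemma Bmat_mul_polMat_mulVec_apply (hμ : ∀ s a, μ s a ≠ 0) (t : ℕ) (g : S × A → ℝ)
    (x : S × A) :
    ((Bmat P μ β t * polMat P π) *ᵥ g) x =
      ∑ F : Fin (t + 2) → S × A,
        if F 0 = x then
          prMu P μ F * (β t (fun k => F k.castSucc) * isRatio π μ (F (Fin.last (t + 1)))) *
            g (F (Fin.last (t + 1)))
        else 0 := by
  rw [← mulVec_mulVec, Bmat_mulVec_apply, Fintype.sum_pi_fin_succ_snoc]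
  refine sum_congr rfl fun G _ => ?_
  simp only [← Fin.castSucc_zero, Fin.snoc_castSucc, Fin.snoc_last, prMu_snoc]
  split_ifs
  · rw [mulVec, dotProduct, mul_sum]
    refine sum_congr rfl fun y _ => ?_
    simp only [isRatio, polMat]
    field_simp [hμ y.1 y.2]
  · simp

lemma Bmat_succ_mulVec_one_le (hP : ∀ s a s', 0 ≤ P s a s') (hμ : ∀ s a, 0 < μ s a)
    (hc : Cond1 π μ β) (t : ℕ) :
    Bmat P μ β (t + 1) *ᵥ 1 ≤ (Bmat P μ β t * polMat P π) *ᵥ 1 := fun x => by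
  rw [Bmat_mulVec_apply, Bmat_mul_polMat_mulVec_apply fun s a => (hμ s a).ne']
  refine sum_le_sum fun F _ => ?_
  split_ifs
  · exact mul_le_mul_of_nonneg_right
      (mul_le_mul_of_nonneg_left (hc t F) (prMu_nonneg hP (fun s a => (hμ s a).le) F))
      zero_le_one
  · exact le_rfl

lemma Bmat_mul_polMat_mulVec_one (hP : IsTransition P) (hπ : IsPolicy π) (t : ℕ) :
    (Bmat P μ β t * polMat P π) *ᵥ 1 = Bmat P μ β t *ᵥ 1 := by
  rw [← mulVec_mulVec, (polMat_mem_rowStochastic hP hπ).2]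

lemma Bmat_mulVec_one_le (hP : IsTransition P) (hπ : IsPolicy π) (hμ : IsBehavior μ)
    (hβ : IsTrace β) (hc : Cond1 π μ β) (t : ℕ) : Bmat P μ β t *ᵥ 1 ≤ 1 := by
  induction t with
  | zero => rw [Bmat_zero hβ, one_mulVec]
  | succ t ih =>
    calc Bmat P μ β (t + 1) *ᵥ 1 ≤ (Bmat P μ β t * polMat P π) *ᵥ 1 :=
          Bmat_succ_mulVec_one_le hP.1 hμ.2 hc t
      _ = Bmat P μ β t *ᵥ 1 := Bmat_mul_polMat_mulVec_one hP hπ t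
      _ ≤ 1 := ih

lemma abs_Bmat_mulVec_apply_le (hP : IsTransition P) (hπ : IsPolicy π) (hμ : IsBehavior μ)
    (hβ : IsTrace β) (hc : Cond1 π μ β) (t : ℕ) (g : S × A → ℝ) (x : S × A) :
    |(Bmat P μ β t *ᵥ g) x| ≤ ‖g‖ :=
  abs_mulVec_apply_le_norm (Bmat_nonneg hP.1 (fun s a => (hμ.2 s a).le) hβ t)
    (Bmat_mulVec_one_le hP hπ hμ hβ hc t) g x

lemma abs_Bmat_mul_polMat_mulVec_apply_le (hP : IsTransition P) (hπ : IsPolicy π)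
    (hμ : IsBehavior μ) (hβ : IsTrace β) (hc : Cond1 π μ β) (t : ℕ) (g : S × A → ℝ)
    (x : S × A) : |((Bmat P μ β t * polMat P π) *ᵥ g) x| ≤ ‖g‖ :=
  abs_mulVec_apply_le_norm
    (fun x y => sum_nonneg fun z _ => mul_nonneg
      (Bmat_nonneg hP.1 (fun s a => (hμ.2 s a).le) hβ t x z)
      ((polMat_mem_rowStochastic hP hπ).1 z y))
    ((Bmat_mul_polMat_mulVec_one hP hπ t).trans_le (Bmat_mulVec_one_le hP hπ hμ hβ hc t)) g x

lemma bootstrap_sum_eq (hμ : ∀ s a, μ s a ≠ 0) (t : ℕ) (g : S × A → ℝ) (x : S × A) :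
    (∑ F : Fin (t + 2) → S × A,
      if F 0 = x then
        prMu P μ F * (β t (fun k => F k.castSucc) * isRatio π μ (F (Fin.last (t + 1)))
          - β (t + 1) F) * g (F (Fin.last (t + 1)))
      else 0) =
      ((Bmat P μ β t * polMat P π) *ᵥ g) x - (Bmat P μ β (t + 1) *ᵥ g) x := by
  rw [Bmat_mul_polMat_mulVec_apply hμ, Bmat_mulVec_apply, ← sum_sub_distrib]
  refine sum_congr rfl fun F _ => ?_
  split_ifs <;> ring

end MDP

theorem stmt17_general {S A : Type} [Fintype S] [Fintype A] [DecidableEq S] [DecidableEq A]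
    (P : S → A → S → ℝ) (R : S × A → ℝ) (π μ : S → A → ℝ) (γ : ℝ)
    (β : (t : ℕ) → (Fin (t + 1) → S × A) → ℝ)
    (hP : IsTransition P) (hπ : IsPolicy π) (hμ : IsBehavior μ) (hβ : IsTrace β)
    (hγ0 : 0 ≤ γ) (hγ1 : γ < 1)
    (hc : Cond1 π μ β) :
    ∀ (Q : S × A → ℝ) (x : S × A),
      (Summable fun t : ℕ =>
        |γ ^ t * ∑ F : Fin (t + 1) → S × A,
          if F 0 = x then prMu P μ F * β t F * R (F (Fin.last t)) else 0|) ∧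
      (Summable fun t : ℕ =>
        |γ ^ (t + 1) * ∑ F : Fin (t + 2) → S × A,
          if F 0 = x then
            prMu P μ F *
              (β t (fun k => F k.castSucc) * isRatio π μ (F (Fin.last (t + 1)))
                - β (t + 1) F) * Q (F (Fin.last (t + 1)))
          else 0|) ∧
      Mop P R π μ β γ Q x =
        (∑' t : ℕ, γ ^ t * ∑ F : Fin (t + 1) → S × A,
          if F 0 = x then prMu P μ F * β t F * R (F (Fin.last t)) else 0) +
        (∑' t : ℕ, γ ^ (t + 1) * ∑ F : Fin (t + 2) → S × A,
          if F 0 = x then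
            prMu P μ F *
              (β t (fun k => F k.castSucc) * isRatio π μ (F (Fin.last (t + 1)))
                - β (t + 1) F) * Q (F (Fin.last (t + 1)))
          else 0) ∧
      ∀ (t : ℕ) (F : Fin (t + 2) → S × A),
        0 ≤ β t (fun k => F k.castSucc) * isRatio π μ (F (Fin.last (t + 1)))
            - β (t + 1) F := by
  intro Q x
  set a : ℕ → ℝ := fun t => (Bmat P μ β t *ᵥ R) x
  set c : ℕ → ℝ := fun t => ((Bmat P μ β t * polMat P π) *ᵥ Q) x
  set d : ℕ → ℝ := fun t => (Bmat P μ β t *ᵥ Q) x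
  have reward_eq (t : ℕ) : (∑ F : Fin (t + 1) → S × A,
      if F 0 = x then prMu P μ F * β t F * R (F (Fin.last t)) else 0) = a t :=
    (Bmat_mulVec_apply t R x).symm
  have ha_le (t : ℕ) : |a t| ≤ ‖R‖ := abs_Bmat_mulVec_apply_le hP hπ hμ hβ hc t R x
  have hc_le (t : ℕ) : |c t| ≤ ‖Q‖ := abs_Bmat_mul_polMat_mulVec_apply_le hP hπ hμ hβ hc t Q x
  have hd_le (t : ℕ) : |d t| ≤ ‖Q‖ := abs_Bmat_mulVec_apply_le hP hπ hμ hβ hc t Q x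
  have bootstrap_eq (t : ℕ) :=
    bootstrap_sum_eq (P := P) (π := π) (β := β) (fun s a => (hμ.2 s a).ne') t Q x
  have hd0 : d 0 = Q x := by simp only [d, Bmat_zero hβ, one_mulVec]
  have hsum {f : ℕ → ℝ} {C : ℝ} (hf : ∀ t, |f t| ≤ C) : Summable fun t => γ ^ t * f t :=
    (summable_abs_pow_mul_of_abs_le hγ0 hγ1 hf).of_abs
  refine ⟨?_, ?_, ?_, fun t F => sub_nonneg.2 (hc t F)⟩
  · simpa only [reward_eq] using summable_abs_pow_mul_of_abs_le hγ0 hγ1 ha_le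
  · have hb (t : ℕ) : |c t - d (t + 1)| ≤ ‖Q‖ + ‖Q‖ :=
      (abs_sub _ _).trans (add_le_add (hc_le t) (hd_le _))
    refine ((summable_abs_pow_mul_of_abs_le hγ0 hγ1 hb).mul_left γ).congr fun t => ?_
    rw [bootstrap_eq, pow_succ, abs_mul, abs_mul, abs_mul, abs_of_nonneg hγ0]
    ring
  · simp only [reward_eq, bootstrap_eq, Mop, mulVec_Tpi_sub, ← hd0]
    exact add_tsum_pow_mul_telescope (hsum ha_le) (hsum hc_le) (hsum hd_le)

/-- under Condition 1 and `γ ∈ [0,1)`, the operator `M` refactors as a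
trajectory-weighted discounted-reward series plus a series of weighted value-function
bootstraps with nonnegative weights `β(F_{t−1})ρ_t − β(F_t)`, both converging absolutely. -/
theorem stmt17 {S A : Type} [Fintype S] [Fintype A] [DecidableEq S] [DecidableEq A]
    [Nonempty S] [Nonempty A]
    (P : S → A → S → ℝ) (R : S × A → ℝ) (π μ : S → A → ℝ) (γ : ℝ)
    (β : (t : ℕ) → (Fin (t + 1) → S × A) → ℝ)
    (hP : IsTransition P) (hπ : IsPolicy π) (hμ : IsBehavior μ) (hβ : IsTrace β)
    (hγ0 : 0 ≤ γ) (hγ1 : γ < 1)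
    (hc : Cond1 π μ β) :
    ∀ (Q : S × A → ℝ) (x : S × A),
      (Summable fun t : ℕ =>
        |γ ^ t * ∑ F : Fin (t + 1) → S × A,
          if F 0 = x then prMu P μ F * β t F * R (F (Fin.last t)) else 0|) ∧
      (Summable fun t : ℕ =>
        |γ ^ (t + 1) * ∑ F : Fin (t + 2) → S × A,
          if F 0 = x then
            prMu P μ F *
              (β t (fun k => F k.castSucc) * isRatio π μ (F (Fin.last (t + 1)))
                - β (t + 1) F) * Q (F (Fin.last (t + 1)))
          else 0|) ∧
      Mop P R π μ β γ Q x =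
        (∑' t : ℕ, γ ^ t * ∑ F : Fin (t + 1) → S × A,
          if F 0 = x then prMu P μ F * β t F * R (F (Fin.last t)) else 0) +
        (∑' t : ℕ, γ ^ (t + 1) * ∑ F : Fin (t + 2) → S × A,
          if F 0 = x then
            prMu P μ F *
              (β t (fun k => F k.castSucc) * isRatio π μ (F (Fin.last (t + 1)))
                - β (t + 1) F) * Q (F (Fin.last (t + 1)))
          else 0) ∧
      ∀ (t : ℕ) (F : Fin (t + 2) → S × A),
        0 ≤ β t (fun k => F k.castSucc) * isRatio π μ (F (Fin.last (t + 1)))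
            - β (t + 1) F :=
  stmt17_general P R π μ γ β hP hπ hμ hβ hγ0 hγ1 hc
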